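/- Let $\mathcal{X}$ be a measurable space and let $(X_1, Y_1), \ldots, (X_{n+1}, Y_{n+1})$ be random variables taking values in $\mathcal{X} \times \mathbb{R}$ whose joint law is exchangeable. For each $x \in \mathcal{X}$, let $\hat{F}_x : \mathbb{R} \to (0,1)$ be a strictly increasing measurable estimated conditional CDF (jointly measurable in $x$ and its argument). Define $\alpha_i = \hat{F}_{X_i}(Y_i)$ and assume $\alpha_1,\ldots,\alpha_{n+1}$ are almost surely pairwise distinct; let $\alpha_{(i)}$ denote the $i$-th smallest of $\alpha_1,\ldots,\alpha_n$. Fix a target interval $[y^-, y^+]$ with $y^- \leq y^+$, and define (as random variables depending on $X_{n+1}$) $\alpha^- = \min\{ i \in \{1,\ldots,n\} : \alpha_{(i)} \geq \hat{F}_{X_{n+1}}(y^-) \}$ and $\alpha^+ = \max\{ i \in \{1,\ldots,n\} : \alpha_{(i)} \leq \hat{F}_{X_{n+1}}(y^+) \}$ (assume this minimum and maximum exist almost surely), and set $p^- = \frac{\alpha^+ - \alpha^-}{n+1}$ and $p^+ = \frac{\alpha^+ - \alpha^- + 2}{n+1}$. Then, when $\alpha^-$ and $\alpha^+$ are almost surely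 constant (deterministic), $p^- \leq P\left(y^- \leq Y_{n+1} \leq y^+\right) \leq p^+$. -/

import Mathlib

/-!
The cumulative probabilities `αᵢ = F (Xᵢ) (Yᵢ)` inherit exchangeability from the pairs, and
since they are a.s. distinct, the rank `r = 1 + #{k ≤ n | αₖ ≤ αₙ₊₁}` of the test value is
uniform on `{1, …, n + 1}`. As `F (Xₙ₊₁)` is increasing, `y⁻ ≤ Yₙ₊₁ ≤ y⁺` means
`F (Xₙ₊₁) y⁻ ≤ αₙ₊₁ ≤ F (Xₙ₊₁) y⁺`, and comparing `αₙ₊₁` with the order statistics `α₍ᵢ₎`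
(`α₍ᵢ₎ ≤ x ↔ i ≤ #{k | αₖ ≤ x}`) shows that this event contains `{α⁻ < r ≤ α⁺}` and is contained
in `{α⁻ ≤ r ≤ α⁺ + 1}`, events of probability `(α⁺ - α⁻)/(n+1)` and `(α⁺ - α⁻ + 2)/(n+1)`.
-/

open MeasureTheory
open scoped ENNReal

/-- The `i`-th order statistic (1-based) of the values `v 0, …, v (n-1)`: the `i`-th
smallest value, expressed as the least `x` such that at least `i` of the values are `≤ x`. -/
noncomputable def orderStat (n : ℕ) (v : Fin n → ℝ) (i : ℕ) : ℝ :=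
  sInf {x : ℝ | i ≤ (Finset.univ.filter (fun j : Fin n => v j ≤ x)).card}

open Finset

section OrderStatistics

variable {n : ℕ} {v : Fin n → ℝ}

theorem orderStat_le_iff {i : ℕ} (hi : 1 ≤ i) (hin : i ≤ n) {x : ℝ} :
    orderStat n v i ≤ x ↔ i ≤ #{j | v j ≤ x} := by
  set S := {x : ℝ | i ≤ #{j | v j ≤ x}}
  have hmono : ∀ {x y : ℝ}, x ≤ y → x ∈ S → y ∈ S := fun hxy hx =>
    hx.trans (card_le_card fun j hj => by
      simp only [mem_filter, mem_univ, true_and] at hj ⊢; exact hj.trans hxy)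
  -- the largest data point below `x ∈ S` has the same count as `x`
  have hdata : ∀ x ∈ S, ∃ j, v j ∈ S ∧ v j ≤ x := by
    intro x hx
    have hpos : 0 < #{j | v j ≤ x} := by simp only [S, Set.mem_ofPred_eq] at hx; omega
    obtain ⟨j, hj, hjmax⟩ := exists_max_image {j | v j ≤ x} v (card_pos.mp hpos)
    have hjx : v j ≤ x := (mem_filter.mp hj).2
    refine ⟨j, ?_, hjx⟩
    have : univ.filter (v · ≤ v j) = univ.filter (v · ≤ x) := filter_congr fun k _ =>
      ⟨fun hk => hk.trans hjx, fun hk => hjmax k (mem_filter.mpr ⟨mem_univ k, hk⟩)⟩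
    simpa [S, this] using hx
  obtain ⟨x, hx⟩ := (Set.finite_range v).bddAbove
  have hxS : x ∈ S := by
    have : univ.filter (v · ≤ x) = univ := filter_true_of_mem fun j _ => hx ⟨j, rfl⟩
    simpa [S, this] using hin
  obtain ⟨j₀, hj₀S, hj₀min⟩ := Set.exists_min_image {j | v j ∈ S} v (Set.toFinite _)
    (let ⟨j, hj, _⟩ := hdata x hxS; ⟨j, hj⟩)
  have hleast : IsLeast S (v j₀) :=
    ⟨hj₀S, fun y hy => let ⟨j, hjS, hjy⟩ := hdata y hy; (hj₀min j hjS).trans hjy⟩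
  rw [orderStat, hleast.csInf_eq]
  exact ⟨fun h => hmono h hj₀S, fun h => hleast.2 h⟩

variable {tlo thi z : ℝ} {a b : ℕ}

theorem le_of_min_le_card
    (hmin : ((Icc 1 n).filter (fun i => tlo ≤ orderStat n v i)).min = (a : WithTop ℕ))
    (h : a ≤ #{j | v j ≤ z}) : tlo ≤ z := by
  rw [Nat.cast_withTop] at hmin
  obtain ⟨ha, htlo⟩ := mem_filter.mp (mem_of_min hmin)
  rw [mem_Icc] at ha
  exact htlo.trans ((orderStat_le_iff ha.1 ha.2).mpr h)

theorem lt_of_card_lt_max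
    (hmax : ((Icc 1 n).filter (fun i => orderStat n v i ≤ thi)).max = (b : WithBot ℕ))
    (h : #{j | v j ≤ z} < b) : z < thi := by
  rw [Nat.cast_withBot] at hmax
  obtain ⟨hb, hthi⟩ := mem_filter.mp (mem_of_max hmax)
  rw [mem_Icc] at hb
  exact (not_le.mp fun hz => h.not_ge ((orderStat_le_iff hb.1 hb.2).mp hz)).trans_le hthi

theorem min_le_card_succ
    (hmin : ((Icc 1 n).filter (fun i => tlo ≤ orderStat n v i)).min = (a : WithTop ℕ))
    (h : tlo ≤ z) : a ≤ #{j | v j ≤ z} + 1 := by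
  rw [Nat.cast_withTop] at hmin
  have han : a ≤ n := (mem_Icc.mp (mem_filter.mp (mem_of_min hmin)).1).2
  by_cases hc : #{j | v j ≤ z} + 1 ≤ n
  · have hlt : z < orderStat n v (#{j | v j ≤ z} + 1) :=
      not_le.mp fun hz => by have := (orderStat_le_iff le_add_self hc).mp hz; omega
    exact min_le_of_eq (mem_filter.mpr ⟨mem_Icc.mpr ⟨le_add_self, hc⟩, h.trans hlt.le⟩) hmin
  · omega

theorem card_le_max
    (hmax : ((Icc 1 n).filter (fun i => orderStat n v i ≤ thi)).max = (b : WithBot ℕ))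
    (h : z ≤ thi) : #{j | v j ≤ z} ≤ b := by
  rw [Nat.cast_withBot] at hmax
  rcases Nat.eq_zero_or_pos #{j | v j ≤ z} with hc | hc
  · omega
  have hcn : #{j | v j ≤ z} ≤ n := (card_filter_le _ _).trans (by simp)
  exact le_max_of_eq (mem_filter.mpr ⟨mem_Icc.mpr ⟨hc, hcn⟩,
    ((orderStat_le_iff hc hcn).mpr le_rfl).trans h⟩) hmax

theorem min_le_max_succ
    (hmin : ((Icc 1 n).filter (fun i => tlo ≤ orderStat n v i)).min = (a : WithTop ℕ))
    (hmax : ((Icc 1 n).filter (fun i => orderStat n v i ≤ thi)).max = (b : WithBot ℕ))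
    (h : tlo ≤ thi) : a ≤ b + 1 :=
  (min_le_card_succ (z := tlo) hmin le_rfl).trans (Nat.succ_le_succ (card_le_max hmax h))

theorem Icc_min_max_succ_subset
    (hmin : ((Icc 1 n).filter (fun i => tlo ≤ orderStat n v i)).min = (a : WithTop ℕ))
    (hmax : ((Icc 1 n).filter (fun i => orderStat n v i ≤ thi)).max = (b : WithBot ℕ)) :
    Icc a (b + 1) ⊆ Icc 1 (n + 1) := by
  rw [Nat.cast_withTop] at hmin
  rw [Nat.cast_withBot] at hmax
  have ha := (mem_Icc.mp (mem_filter.mp (mem_of_min hmin)).1).1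
  have hb := (mem_Icc.mp (mem_filter.mp (mem_of_max hmax)).1).2
  exact Icc_subset_Icc ha (by omega)

end OrderStatistics

section Rank

variable {ι : Type*} [Fintype ι]

noncomputable def rank (v : ι → ℝ) (j : ι) : ℕ := #{i | v i ≤ v j}

theorem rank_comp_perm (v : ι → ℝ) (σ : Equiv.Perm ι) (j : ι) :
    rank (v ∘ σ) j = rank v (σ j) :=
  card_equiv σ fun i => by simp

theorem measurable_rank (j : ι) : Measurable fun v : ι → ℝ => rank v j := by
  simp_rw [rank, card_filter]
  exact Finset.measurable_sum _ fun i _ => Measurable.ite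
    (measurableSet_le (measurable_pi_apply i) (measurable_pi_apply j)) measurable_const
    measurable_const

theorem rank_mem_Icc (v : ι → ℝ) (j : ι) : rank v j ∈ Icc 1 (Fintype.card ι) :=
  mem_Icc.mpr ⟨card_pos.mpr ⟨j, by simp⟩, (card_filter_le _ _).trans_eq (card_univ)⟩

theorem rank_lt_rank {v : ι → ℝ} {i j : ι} (h : v i < v j) : rank v i < rank v j :=
  card_lt_card <| (ssubset_iff_of_subset fun k hk => by
    simp only [mem_filter, mem_univ, true_and] at hk ⊢; exact hk.trans h.le).mpr
    ⟨j, by simp, by simpa using h⟩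

theorem rank_injective {v : ι → ℝ} (hv : Function.Injective v) :
    Function.Injective (rank v) := by
  intro i j hij
  rcases lt_trichotomy (v i) (v j) with h | h | h
  · exact absurd hij (rank_lt_rank h).ne
  · exact hv h
  · exact absurd hij (rank_lt_rank h).ne'

theorem card_rank_eq_one {v : ι → ℝ} (hv : Function.Injective v) {k : ℕ}
    (hk : k ∈ Icc 1 (Fintype.card ι)) : #{j | rank v j = k} = 1 := by
  have himage : univ.image (rank v) = Icc 1 (Fintype.card ι) :=
    eq_of_subset_of_card_le (fun _ hk => by
      obtain ⟨j, -, rfl⟩ := mem_image.mp hk; exact rank_mem_Icc v j)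
      (by simp [card_image_of_injective _ (rank_injective hv)])
  obtain ⟨j, -, rfl⟩ := mem_image.mp (himage ▸ hk)
  exact card_eq_one.mpr ⟨j, by ext i; simpa using (rank_injective hv).eq_iff⟩

end Rank

section Exchangeable

variable {Ω ι β γ : Type*} [MeasurableSpace Ω] [MeasurableSpace β] [MeasurableSpace γ]
  {P : Measure Ω}

def Exchangeable (P : Measure Ω) (Z : ι → Ω → β) : Prop :=
  ∀ σ : Equiv.Perm ι, P.map (fun ω i => Z (σ i) ω) = P.map (fun ω i => Z i ω)

theorem Exchangeable.comp {Z : ι → Ω → β} (h : Exchangeable P Z)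
    (hZ : ∀ i, Measurable (Z i)) {g : β → γ} (hg : Measurable g) :
    Exchangeable P fun i ω => g (Z i ω) := by
  intro σ
  have hg' : Measurable fun (u : ι → β) i => g (u i) :=
    measurable_pi_lambda _ fun i => hg.comp (measurable_pi_apply i)
  calc P.map (fun ω i => g (Z (σ i) ω))
      = (P.map fun ω i => Z (σ i) ω).map fun u i => g (u i) :=
        (Measure.map_map hg' (measurable_pi_lambda _ fun i => hZ (σ i))).symm
    _ = (P.map fun ω i => Z i ω).map fun u i => g (u i) := by rw [h σ]
    _ = P.map fun ω i => g (Z i ω) := Measure.map_map hg' (measurable_pi_lambda _ hZ)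

variable [Fintype ι] {Z : ι → Ω → ℝ}

theorem measurableSet_rank_eq (hZ : ∀ i, Measurable (Z i)) (j : ι) (k : ℕ) :
    MeasurableSet {ω | rank (Z · ω) j = k} :=
  (measurable_rank j).comp (measurable_pi_lambda _ hZ) (measurableSet_singleton k)

theorem Exchangeable.measure_rank_perm (h : Exchangeable P Z) (hZ : ∀ i, Measurable (Z i))
    (σ : Equiv.Perm ι) (j : ι) (k : ℕ) :
    P {ω | rank (Z · ω) (σ j) = k} = P {ω | rank (Z · ω) j = k} := by
  have hs : MeasurableSet {v : ι → ℝ | rank v j = k} :=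
    measurable_rank j (measurableSet_singleton k)
  calc P {ω | rank (Z · ω) (σ j) = k}
      = P {ω | rank ((Z · ω) ∘ σ) j = k} := by simp only [rank_comp_perm]
    _ = P.map (fun ω i => Z (σ i) ω) {v | rank v j = k} := by
        rw [Measure.map_apply (measurable_pi_lambda _ fun i => hZ (σ i)) hs]
        rfl
    _ = P {ω | rank (Z · ω) j = k} := by
        rw [h σ, Measure.map_apply (measurable_pi_lambda _ hZ) hs]; rfl

theorem Exchangeable.measure_rank_eq [IsProbabilityMeasure P] (h : Exchangeable P Z)
    (hZ : ∀ i, Measurable (Z i)) (hinj : ∀ᵐ ω ∂P, Function.Injective (Z · ω)) (j : ι)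
    {k : ℕ} (hk : k ∈ Icc 1 (Fintype.card ι)) :
    P {ω | rank (Z · ω) j = k} = (Fintype.card ι : ℝ≥0∞)⁻¹ := by
  classical
  have hmeas := fun i => measurableSet_rank_eq hZ i k
  -- a.s. exactly one index has rank `k`, so the events `{rank i = k}` a.s. partition `Ω`
  have hsum : ∑ i, P {ω | rank (Z · ω) i = k} = 1 := by
    calc ∑ i, P {ω | rank (Z · ω) i = k}
        = ∫⁻ ω, ∑ i, {ω | rank (Z · ω) i = k}.indicator 1 ω ∂P := by
          rw [lintegral_finsetSum _ fun i _ => measurable_one.indicator (hmeas i)]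
          simp_rw [lintegral_indicator_one (hmeas _)]
      _ = ∫⁻ _, 1 ∂P := lintegral_congr_ae <| hinj.mono fun ω hω => by
          simp only [Set.indicator_apply, Set.mem_ofPred_eq, Pi.one_apply, sum_boole,
            card_rank_eq_one hω hk, Nat.cast_one]
      _ = 1 := by simp
  have hperm : ∀ i, P {ω | rank (Z · ω) i = k} = P {ω | rank (Z · ω) j = k} := fun i => by
    simpa using h.measure_rank_perm hZ (Equiv.swap j i) j k
  rw [sum_congr rfl fun i _ => hperm i, sum_const, card_univ, nsmul_eq_mul] at hsum
  rw [mul_comm] at hsum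
  exact ENNReal.eq_inv_of_mul_eq_one_left hsum

theorem Exchangeable.measureReal_rank_mem [IsProbabilityMeasure P] (h : Exchangeable P Z)
    (hZ : ∀ i, Measurable (Z i)) (hinj : ∀ᵐ ω ∂P, Function.Injective (Z · ω)) (j : ι)
    {s : Finset ℕ} (hs : s ⊆ Icc 1 (Fintype.card ι)) :
    P.real {ω | rank (Z · ω) j ∈ s} = #s / Fintype.card ι := by
  have hunion : {ω | rank (Z · ω) j ∈ s} = ⋃ k ∈ s, {ω | rank (Z · ω) j = k} := by
    ext; simp
  have hdisj : (s : Set ℕ).PairwiseDisjoint fun k => {ω | rank (Z · ω) j = k} :=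
    fun k _ l _ hkl => Set.disjoint_left.mpr fun ω hk hl => hkl (hk.symm.trans hl)
  rw [measureReal_def, hunion,
    measure_biUnion_finset hdisj fun k _ => measurableSet_rank_eq hZ j k,
    sum_congr rfl fun k hk => h.measure_rank_eq hZ hinj j (hs hk), sum_const, nsmul_eq_mul,
    ENNReal.toReal_mul, ENNReal.toReal_inv, ENNReal.toReal_natCast, ENNReal.toReal_natCast,
    div_eq_mul_inv]

end Exchangeable

section Thresholds

variable {n : ℕ} {v : Fin (n + 1) → ℝ} {tlo thi : ℝ} {a b : ℕ}

theorem rank_last :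
    rank v (Fin.last n) = #{k : Fin n | v k.castSucc ≤ v (Fin.last n)} + 1 := by
  rw [rank, Fin.univ_castSuccEmb, filter_cons, if_pos le_rfl, card_cons, filter_map, card_map]
  rfl

theorem mem_Icc_of_rank_last_mem_Icc
    (hmin : ((Icc 1 n).filter fun i =>
      tlo ≤ orderStat n (fun k => v k.castSucc) i).min = (a : WithTop ℕ))
    (hmax : ((Icc 1 n).filter fun i =>
      orderStat n (fun k => v k.castSucc) i ≤ thi).max = (b : WithBot ℕ))
    (hr : rank v (Fin.last n) ∈ Icc (a + 1) b) : v (Fin.last n) ∈ Set.Icc tlo thi := by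
  rw [rank_last, mem_Icc] at hr
  exact ⟨le_of_min_le_card hmin (by omega), (lt_of_card_lt_max hmax (by omega)).le⟩

theorem rank_last_mem_Icc_of_mem_Icc
    (hmin : ((Icc 1 n).filter fun i =>
      tlo ≤ orderStat n (fun k => v k.castSucc) i).min = (a : WithTop ℕ))
    (hmax : ((Icc 1 n).filter fun i =>
      orderStat n (fun k => v k.castSucc) i ≤ thi).max = (b : WithBot ℕ))
    (h : v (Fin.last n) ∈ Set.Icc tlo thi) : rank v (Fin.last n) ∈ Icc a (b + 1) := by
  rw [rank_last, mem_Icc]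
  exact ⟨min_le_card_succ hmin h.1, by have := card_le_max hmax h.2; omega⟩

end Thresholds

theorem pcqr_inverse_marginal_bounds_general
    {𝓧 : Type*} [MeasurableSpace 𝓧] {Ω : Type*} [MeasurableSpace Ω]
    (P : Measure Ω) [IsProbabilityMeasure P] (n : ℕ)
    (X : Fin (n + 1) → Ω → 𝓧) (Y : Fin (n + 1) → Ω → ℝ)
    (hmX : ∀ i, Measurable (X i)) (hmY : ∀ i, Measurable (Y i))
    (hexch : ∀ σ : Equiv.Perm (Fin (n + 1)),
      Measure.map (fun ω => fun i => (X (σ i) ω, Y (σ i) ω)) P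
        = Measure.map (fun ω => fun i => (X i ω, Y i ω)) P)
    (F : 𝓧 → ℝ → ℝ)
    (hFmono : ∀ x, StrictMono (F x))
    (hFmeas : Measurable (fun p : 𝓧 × ℝ => F p.1 p.2))
    (hdist : ∀ᵐ ω ∂P, ∀ i j : Fin (n + 1), i ≠ j →
      F (X i ω) (Y i ω) ≠ F (X j ω) (Y j ω))
    (ym yp : ℝ) (hy : ym ≤ yp)
    (a b : ℕ)
    (hconst : ∀ᵐ ω ∂P,
      ((Finset.Icc 1 n).filter (fun i : ℕ =>
          F (X (Fin.last n) ω) ym ≤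
            orderStat n (fun k : Fin n => F (X k.castSucc ω) (Y k.castSucc ω)) i)).min
          = (a : WithTop ℕ) ∧
      ((Finset.Icc 1 n).filter (fun i : ℕ =>
          orderStat n (fun k : Fin n => F (X k.castSucc ω) (Y k.castSucc ω)) i ≤
            F (X (Fin.last n) ω) yp)).max
          = (b : WithBot ℕ)) :
    ((b : ℝ) - (a : ℝ)) / (n + 1 : ℝ)
        ≤ (P {ω | ym ≤ Y (Fin.last n) ω ∧ Y (Fin.last n) ω ≤ yp}).toReal ∧
      (P {ω | ym ≤ Y (Fin.last n) ω ∧ Y (Fin.last n) ω ≤ yp}).toReal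
        ≤ ((b : ℝ) - (a : ℝ) + 2) / (n + 1 : ℝ) := by
  set α : Fin (n + 1) → Ω → ℝ := fun i ω => F (X i ω) (Y i ω)
  have hα : ∀ i, Measurable (α i) := fun i => hFmeas.comp ((hmX i).prodMk (hmY i))
  have hαexch : Exchangeable P α := Exchangeable.comp (Z := fun i ω => (X i ω, Y i ω)) hexch
    (fun i => (hmX i).prodMk (hmY i)) hFmeas
  have hαinj : ∀ᵐ ω ∂P, Function.Injective (α · ω) :=
    hdist.mono fun ω h i j hij => by_contra fun hne => h i j hne hij
  set E := {ω | ym ≤ Y (Fin.last n) ω ∧ Y (Fin.last n) ω ≤ yp}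
  have hE : ∀ ω, ω ∈ E ↔
      α (Fin.last n) ω ∈ Set.Icc (F (X (Fin.last n) ω) ym) (F (X (Fin.last n) ω) yp) := by
    intro ω
    simp only [E, α, Set.mem_ofPred_eq, Set.mem_Icc, (hFmono _).le_iff_le]
  set R := fun s : Finset ℕ => {ω | rank (α · ω) (Fin.last n) ∈ s}
  have hlower : R (Icc (a + 1) b) ≤ᵐ[P] E := hconst.mono fun ω hω hr =>
    (hE ω).mpr (mem_Icc_of_rank_last_mem_Icc (v := (α · ω)) hω.1 hω.2 hr)
  have hupper : E ≤ᵐ[P] R (Icc a (b + 1)) := hconst.mono fun ω hω hr =>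
    rank_last_mem_Icc_of_mem_Icc (v := (α · ω)) hω.1 hω.2 ((hE ω).mp hr)
  -- `a` and `b` are realised at some `ω₀`, which forces `1 ≤ a ≤ b + 1 ≤ n + 1`
  obtain ⟨ω₀, hmin₀, hmax₀⟩ := hconst.exists
  have hab : a ≤ b + 1 := min_le_max_succ hmin₀ hmax₀ ((hFmono _).monotone hy)
  have hsub := Icc_min_max_succ_subset hmin₀ hmax₀
  have hR : ∀ s ⊆ Icc 1 (n + 1), (P (R s)).toReal = #s / (n + 1 : ℝ) := fun s hs => by
    have := hαexch.measureReal_rank_mem hα hαinj (Fin.last n) (s := s)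
      (by rwa [Fintype.card_fin])
    rwa [Fintype.card_fin, Nat.cast_succ] at this
  constructor
  · calc ((b : ℝ) - a) / (n + 1) ≤ #(Icc (a + 1) b) / (n + 1 : ℝ) := by
          gcongr
          have : (b : ℝ) ≤ (b - a : ℕ) + a := by exact_mod_cast (by omega : b ≤ b - a + a)
          rw [Nat.card_Icc, Nat.add_sub_add_right]; linarith
      _ = (P (R (Icc (a + 1) b))).toReal :=
          (hR _ ((Icc_subset_Icc a.le_succ b.le_succ).trans hsub)).symm
      _ ≤ (P E).toReal := ENNReal.toReal_mono (measure_ne_top _ _) (measure_mono_ae hlower)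
  · calc (P E).toReal ≤ (P (R (Icc a (b + 1)))).toReal :=
          ENNReal.toReal_mono (measure_ne_top _ _) (measure_mono_ae hupper)
      _ = #(Icc a (b + 1)) / (n + 1 : ℝ) := hR _ hsub
      _ = ((b : ℝ) - a + 2) / (n + 1) := by
          rw [Nat.card_Icc, Nat.cast_sub (by omega)]; push_cast; ring

/-- Theorem 2 of the paper, validity of PCQR⁻¹: given exchangeable pairs
`(X i, Y i)` in `𝓧 × ℝ`, per-input strictly increasing estimated CDFs
`F x : ℝ → (0,1)`, a.s. pairwise distinct calibration cumulative probabilities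
`α i = F (X i) (Y i)` with order statistics `α_(i)`, and a target interval
`[y⁻, y⁺]`, define `α⁻ = min {i ∈ {1,…,n} : α_(i) ≥ F (X last) y⁻}` and
`α⁺ = max {i ∈ {1,…,n} : α_(i) ≤ F (X last) y⁺}`. If `α⁻` and `α⁺` exist and are
almost surely equal to the constants `a` and `b` respectively, then
`(b - a)/(n+1) ≤ P(y⁻ ≤ Y last ≤ y⁺) ≤ (b - a + 2)/(n+1)`. -/
theorem pcqr_inverse_marginal_bounds
    {𝓧 : Type*} [MeasurableSpace 𝓧] {Ω : Type*} [MeasurableSpace Ω]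
    (P : Measure Ω) [IsProbabilityMeasure P] (n : ℕ)
    (X : Fin (n + 1) → Ω → 𝓧) (Y : Fin (n + 1) → Ω → ℝ)
    (hmX : ∀ i, Measurable (X i)) (hmY : ∀ i, Measurable (Y i))
    (hexch : ∀ σ : Equiv.Perm (Fin (n + 1)),
      Measure.map (fun ω => fun i => (X (σ i) ω, Y (σ i) ω)) P
        = Measure.map (fun ω => fun i => (X i ω, Y i ω)) P)
    (F : 𝓧 → ℝ → ℝ)
    (hFmono : ∀ x, StrictMono (F x))
    (hFrange : ∀ x y, F x y ∈ Set.Ioo (0 : ℝ) 1)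
    (hFmeas : Measurable (fun p : 𝓧 × ℝ => F p.1 p.2))
    (hdist : ∀ᵐ ω ∂P, ∀ i j : Fin (n + 1), i ≠ j →
      F (X i ω) (Y i ω) ≠ F (X j ω) (Y j ω))
    (ym yp : ℝ) (hy : ym ≤ yp)
    (a b : ℕ)
    (hconst : ∀ᵐ ω ∂P,
      ((Finset.Icc 1 n).filter (fun i : ℕ =>
          F (X (Fin.last n) ω) ym ≤
            orderStat n (fun k : Fin n => F (X k.castSucc ω) (Y k.castSucc ω)) i)).min
          = (a : WithTop ℕ) ∧
      ((Finset.Icc 1 n).filter (fun i : ℕ =>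
          orderStat n (fun k : Fin n => F (X k.castSucc ω) (Y k.castSucc ω)) i ≤
            F (X (Fin.last n) ω) yp)).max
          = (b : WithBot ℕ)) :
    ((b : ℝ) - (a : ℝ)) / (n + 1 : ℝ)
        ≤ (P {ω | ym ≤ Y (Fin.last n) ω ∧ Y (Fin.last n) ω ≤ yp}).toReal ∧
      (P {ω | ym ≤ Y (Fin.last n) ω ∧ Y (Fin.last n) ω ≤ yp}).toReal
        ≤ ((b : ℝ) - (a : ℝ) + 2) / (n + 1 : ℝ) :=
  pcqr_inverse_marginal_bounds_general P n X Y hmX hmY hexch F hFmono hFmeas hdist ym yp hy a b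
    hconst
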